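/- Under condition (ℂ): E_i ∏_{n=0}^∞ max(Q(Xₙ,ℤ₊),1) < ∞ for every state i, the function f(i) := E_i ∏_{n=0}^∞ Q(Xₙ,ℤ₊) is harmonic for the kernel Q, i.e., ∑_{j=0}^∞ Q(i,j) f(j) = f(i) for every i ∈ ℤ₊. -/

import Mathlib

open MeasureTheory Filter Topology
open scoped ENNReal NNReal

structure MC where
  μ : ℕ → Measure (ℕ → ℕ)
  prob : ∀ i, IsProbabilityMeasure (μ i)
  start : ∀ i, μ i {ω | ω 0 = i} = 1
  P : ℕ → ℕ → ℝ≥0∞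
  P_sum : ∀ i, ∑' j, P i j = 1
  markov : ∀ i, (μ i).map (fun ω n => ω (n + 1)) = Measure.sum fun j => P i j • μ j

noncomputable def qt (Q : ℕ → ℕ → ℝ≥0∞) (i : ℕ) : ℝ≥0∞ := ∑' j, Q i j

noncomputable def fQ (Q : ℕ → ℕ → ℝ≥0∞) (X : MC) (i : ℕ) : ℝ≥0∞ :=
  ∫⁻ ω, ∏' n, qt Q (ω n) ∂(X.μ i)

def condC (Q : ℕ → ℕ → ℝ≥0∞) (X : MC) : Prop :=
  ∀ i, (∫⁻ ω, ∏' n, max (qt Q (ω n)) 1 ∂(X.μ i)) < ∞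

noncomputable def Qpow (Q : ℕ → ℕ → ℝ≥0∞) : ℕ → ℕ → ℕ → ℝ≥0∞
  | 0 => fun i j => if i = j then 1 else 0
  | n + 1 => fun i j => ∑' k, Q i k * Qpow Q n k j

def Irred (Q : ℕ → ℕ → ℝ≥0∞) : Prop := ∀ i j, ∃ n, 0 < Qpow Q n i j

noncomputable def locTime (j : ℕ) (ω : ℕ → ℕ) : ℝ≥0∞ := ∑' n, if ω n = j then 1 else 0

noncomputable def locExp (γ : ℝ) (j : ℕ) (ω : ℕ → ℕ) : ℝ≥0∞ :=
  ∏' n, if ω n = j then ENNReal.ofReal (Real.exp γ) else 1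

noncomputable def deltaQ (Q : ℕ → ℕ → ℝ≥0∞) (j : ℕ) : ℝ := Real.log (qt Q j).toReal

noncomputable def jumpP (X : MC) (i : ℕ) (j : ℤ) : ℝ≥0∞ :=
  if 0 ≤ (i : ℤ) + j then X.P i ((i : ℤ) + j).toNat else 0


/-!
Condition (ℂ) makes `∏ max (q Xₙ) 1` finite almost surely. Since the product of the factors
`min (q Xₙ) 1` always converges in `ℝ≥0∞`, the product `∏ q Xₙ` then converges, so it splits off
its first factor: `∏ₙ q Xₙ = q X₀ * ∏ₙ q Xₙ₊₁`. The Markov property at time 1 turns the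
expectation of the tail into `∑ⱼ P(i,j) f(j)`, and `q i * P(i,j) = Q(i,j)`.
-/

namespace ENNReal

variable {ι : Type*}

theorem multipliable_of_one_le {f : ι → ℝ≥0∞} (h : ∀ i, 1 ≤ f i) : Multipliable f :=
  ⟨_, hasProd_of_isLUB_of_one_le _ h (isLUB_sSup _)⟩

theorem multipliable_of_tprod_max_one_ne_top {f : ι → ℝ≥0∞} (h : ∏' i, max (f i) 1 ≠ ∞) :
    Multipliable f := by
  have hmax := (multipliable_of_one_le fun i => le_max_right (f i) 1).hasProd
  have hmin := (multipliable_of_le_one fun i => min_le_right (f i) 1).hasProd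
  have hne : ∏' i, max (f i) 1 ≠ 0 :=
    (one_le_tprod fun i => le_max_right (f i) 1).trans_lt' one_pos |>.ne'
  refine ⟨_, (ENNReal.Tendsto.mul hmax (.inl hne) hmin (.inr h)).congr fun s => ?_⟩
  rw [← Finset.prod_mul_distrib]
  exact Finset.prod_congr rfl fun i _ => (max_mul_min (f i) 1).trans (mul_one _)

/-- `HasProd.zero_mul` needs `ContinuousMul`, which `ℝ≥0∞` lacks; a finite first factor suffices. -/
theorem hasProd_zero_mul {f : ℕ → ℝ≥0∞} {m : ℝ≥0∞} (h : HasProd (fun n => f (n + 1)) m)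
    (h0 : f 0 ≠ ∞) : HasProd f (f 0 * m) := by
  have htail : HasProd (Set.mulIndicator {n | n ∉ Finset.range 1} f) m :=
    hasProd_subtype_iff_mulIndicator.mp ((notMemRangeEquiv 1).symm.hasProd_iff.mp h)
  refine (ENNReal.Tendsto.const_mul htail (.inr h0)).congr' ?_
  filter_upwards [eventually_ge_atTop {0}] with s hs
  rw [← Finset.mul_prod_erase s f (by simpa using hs), Finset.prod_mulIndicator_eq_prod_filter]
  congr 2
  ext n
  simp [and_comm]

theorem tprod_eq_zero_mul_of_tprod_max_one_ne_top {f : ℕ → ℝ≥0∞} (h : ∏' n, max (f n) 1 ≠ ∞)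
    (h0 : f 0 ≠ ∞) : ∏' n, f n = f 0 * ∏' n, f (n + 1) := by
  have hmax : ∏' n, max (f n) 1 = max (f 0) 1 * ∏' n, max (f (n + 1)) 1 :=
    (hasProd_zero_mul (f := fun n => max (f n) 1)
      (multipliable_of_one_le fun n => le_max_right (f (n + 1)) 1).hasProd
      (max_ne_top h0 one_ne_top)).tprod_eq
  have htail : ∏' n, max (f (n + 1)) 1 ≠ ∞ := by
    intro htop
    rw [htop, mul_top (one_pos.trans_le (le_max_right _ _)).ne'] at hmax
    exact h hmax
  exact (hasProd_zero_mul (multipliable_of_tprod_max_one_ne_top htail).hasProd h0).tprod_eq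

end ENNReal

namespace MC

variable (X : MC)

theorem ae_start (i : ℕ) : ∀ᵐ ω ∂X.μ i, ω 0 = i := by
  have := X.prob i
  have hset : MeasurableSet {ω : ℕ → ℕ | ω 0 = i} :=
    measurableSet_eq_fun (measurable_pi_apply 0) measurable_const
  rw [ae_iff_measure_eq hset.nullMeasurableSet, X.start i, measure_univ]

theorem lintegral_comp_shift (i : ℕ) {F : (ℕ → ℕ) → ℝ≥0∞} (hF : Measurable F) :
    ∫⁻ ω, F (fun n => ω (n + 1)) ∂X.μ i = ∑' j, X.P i j * ∫⁻ ω, F ω ∂X.μ j := by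
  have hshift : Measurable fun (ω : ℕ → ℕ) n => ω (n + 1) := by fun_prop
  rw [← lintegral_map hF hshift, X.markov i, lintegral_sum_measure]
  simp_rw [lintegral_smul_measure, smul_eq_mul]

end MC

theorem stmt1 (Q : ℕ → ℕ → ℝ≥0∞) (X : MC)
    (hpos : ∀ i, 0 < qt Q i) (hfin : ∀ i, qt Q i < ∞)
    (hP : ∀ i j, X.P i j = Q i j / qt Q i)
    (hC : condC Q X) :
    ∀ i, ∑' j, Q i j * fQ Q X j = fQ Q X i := by
  intro i
  have hmeas : ∀ g : ℕ → ℝ≥0∞, Measurable fun ω : ℕ → ℕ => ∏' n, g (ω n) := fun g => by fun_prop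
  have hfinite : ∀ᵐ ω ∂X.μ i, ∏' n, max (qt Q (ω n)) 1 ≠ ∞ :=
    (ae_lt_top (hmeas fun j => max (qt Q j) 1) (hC i).ne).mono fun ω => LT.lt.ne
  have hsplit : ∀ᵐ ω ∂X.μ i, ∏' n, qt Q (ω n) = qt Q i * ∏' n, qt Q (ω (n + 1)) := by
    filter_upwards [X.ae_start i, hfinite] with ω h0 hω
    rw [ENNReal.tprod_eq_zero_mul_of_tprod_max_one_ne_top hω (h0 ▸ (hfin i).ne), h0]
  calc ∑' j, Q i j * fQ Q X j = qt Q i * ∑' j, X.P i j * fQ Q X j := by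
        rw [← ENNReal.tsum_mul_left]
        refine tsum_congr fun j => ?_
        rw [hP, ← mul_assoc, ENNReal.mul_div_cancel (hpos i).ne' (hfin i).ne]
    _ = qt Q i * ∫⁻ ω, ∏' n, qt Q (ω (n + 1)) ∂X.μ i := by
        simp only [fQ, X.lintegral_comp_shift i (hmeas _)]
    _ = fQ Q X i := by
        rw [← lintegral_const_mul' _ _ (hfin i).ne]
        exact (lintegral_congr_ae hsplit).symm
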